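/- Let ρ ∈ (−1,1) and u, v ∈ ℝ. Then ∫_u^∞ ∫_v^∞ x·y · f_ρ(x,y) dy dx = ρ·ℓ(u,v,ρ) + ρ·u·φ(u)·Φ̄((v − ρu)/√(1−ρ²)) + ρ·v·φ(v)·Φ̄((u − ρv)/√(1−ρ²)) + (√(1−ρ²)/√(2π))·φ(√(u² − 2ρuv + v²)/√(1−ρ²)). -/

import Mathlib

open MeasureTheory

/-- Density of the standard normal distribution. -/
noncomputable def stdNormalPDF (x : ℝ) : ℝ :=
  (Real.sqrt (2 * Real.pi))⁻¹ * Real.exp (-x ^ 2 / 2)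

/-- Survival function of the standard normal distribution. -/
noncomputable def stdNormalSurv (x : ℝ) : ℝ :=
  ∫ t in Set.Ioi x, stdNormalPDF t

/-- Density of the standard bivariate normal distribution with correlation `ρ`. -/
noncomputable def bvnPDF (ρ x y : ℝ) : ℝ :=
  (2 * Real.pi * Real.sqrt (1 - ρ ^ 2))⁻¹ *
    Real.exp (-(x ^ 2 - 2 * ρ * x * y + y ^ 2) / (2 * (1 - ρ ^ 2)))

/-- Total probability of the truncated standard bivariate normal distribution. -/
noncomputable def ell (u v ρ : ℝ) : ℝ :=
  ∫ x in Set.Ioi u, ∫ y in Set.Ioi v, bvnPDF ρ x y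

/-! Writing `s = √(1 - ρ²)`, the density factors as `f_ρ(x, y) = φ(x) · s⁻¹ φ((y - ρx) / s)`,
so the inner integrals are truncated moments of `N(ρx, s²)`; in particular
`∫_v^∞ y f_ρ(x, y) dy = ρ x φ(x) Φ̄((v - ρx) / s) + s² f_ρ(x, v)`.
For the outer integral, integrating the derivative of `x φ(x) Φ̄((v - ρx) / s)` over `(u, ∞)`
turns `∫ x² φ(x) Φ̄((v - ρx) / s)` into `ℓ`, a boundary term at `u` and `ρ ∫ x f_ρ(x, v) dx`.
By the symmetry of `f_ρ` the latter is again an inner first moment, `ρ² + s² = 1` collects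
the terms, and `s² f_ρ(u, v)` is the Gaussian term of the formula. -/

open Set Filter Topology

lemma stdNormalPDF_eq_gaussianPDFReal :
    stdNormalPDF = ProbabilityTheory.gaussianPDFReal 0 1 := by
  ext x
  simp [stdNormalPDF, ProbabilityTheory.gaussianPDFReal]

lemma stdNormalPDF_nonneg (x : ℝ) : 0 ≤ stdNormalPDF x := by
  unfold stdNormalPDF; positivity

lemma continuous_stdNormalPDF : Continuous stdNormalPDF := by
  unfold stdNormalPDF; fun_prop

lemma hasDerivAt_stdNormalPDF (x : ℝ) : HasDerivAt stdNormalPDF (-x * stdNormalPDF x) x := by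
  have h : HasDerivAt (fun x : ℝ => -x ^ 2 / 2) (-x) x := by
    simpa [neg_div] using ((hasDerivAt_pow 2 x).fun_neg).div_const 2
  exact (h.exp.const_mul _).congr_deriv (by unfold stdNormalPDF; ring)

lemma integrable_stdNormalPDF : Integrable stdNormalPDF :=
  stdNormalPDF_eq_gaussianPDFReal ▸ ProbabilityTheory.integrable_gaussianPDFReal 0 1

lemma integral_stdNormalPDF : ∫ x, stdNormalPDF x = 1 :=
  stdNormalPDF_eq_gaussianPDFReal ▸ ProbabilityTheory.integral_gaussianPDFReal_eq_one 0 one_ne_zero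

lemma integrable_pow_mul_stdNormalPDF (n : ℕ) : Integrable fun x => x ^ n * stdNormalPDF x := by
  have h := (integrable_rpow_mul_exp_neg_mul_sq (show (0 : ℝ) < 1 / 2 by norm_num)
    (show (-1 : ℝ) < n by linarith [n.cast_nonneg (α := ℝ)])).const_mul
    (Real.sqrt (2 * Real.pi))⁻¹
  refine h.congr (Eventually.of_forall fun x => ?_)
  simp only [Real.rpow_natCast, stdNormalPDF]
  ring_nf

lemma tendsto_stdNormalPDF_atTop : Tendsto stdNormalPDF atTop (𝓝 0) :=
  tendsto_zero_of_hasDerivAt_of_integrableOn_Ioi (a := 0)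
    (fun x _ => hasDerivAt_stdNormalPDF x)
    (by simpa using ((integrable_pow_mul_stdNormalPDF 1).neg).integrableOn)
    integrable_stdNormalPDF.integrableOn

section TailIntegral

variable {E : Type*} [NormedAddCommGroup E] [NormedSpace ℝ E] {f : ℝ → E}

lemma integral_Ioi_eq_sub_intervalIntegral (hf : Integrable f) (x : ℝ) :
    ∫ t in Ioi x, f t = (∫ t in Ioi 0, f t) - ∫ t in (0 : ℝ)..x, f t := by
  rw [← intervalIntegral.integral_Ioi_sub_Ioi' hf.integrableOn hf.integrableOn, sub_sub_cancel]

lemma hasDerivAt_integral_Ioi [CompleteSpace E] (hf : Integrable f) {x : ℝ}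
    (hx : ContinuousAt f x) :
    HasDerivAt (fun a => ∫ t in Ioi a, f t) (-f x) x := by
  rw [funext (integral_Ioi_eq_sub_intervalIntegral hf)]
  simpa using (intervalIntegral.integral_hasDerivAt_right hf.intervalIntegrable
    hf.aestronglyMeasurable.stronglyMeasurableAtFilter hx).const_sub _

lemma tendsto_integral_Ioi_atTop [CompleteSpace E] (hf : Integrable f) :
    Tendsto (fun a => ∫ t in Ioi a, f t) atTop (𝓝 0) := by
  rw [funext (integral_Ioi_eq_sub_intervalIntegral hf)]
  simpa using (intervalIntegral_tendsto_integral_Ioi 0 hf.integrableOn tendsto_id).const_sub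
    (∫ t in Ioi 0, f t)

end TailIntegral

lemma stdNormalSurv_nonneg (x : ℝ) : 0 ≤ stdNormalSurv x :=
  setIntegral_nonneg measurableSet_Ioi fun t _ => stdNormalPDF_nonneg t

lemma stdNormalSurv_le_one (x : ℝ) : stdNormalSurv x ≤ 1 :=
  integral_stdNormalPDF ▸ setIntegral_le_integral integrable_stdNormalPDF
    (Eventually.of_forall stdNormalPDF_nonneg)

lemma hasDerivAt_stdNormalSurv (x : ℝ) : HasDerivAt stdNormalSurv (-stdNormalPDF x) x :=
  hasDerivAt_integral_Ioi integrable_stdNormalPDF continuous_stdNormalPDF.continuousAt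

lemma continuous_stdNormalSurv : Continuous stdNormalSurv :=
  continuous_iff_continuousAt.2 fun x => (hasDerivAt_stdNormalSurv x).continuousAt

lemma tendsto_stdNormalSurv_atTop : Tendsto stdNormalSurv atTop (𝓝 0) :=
  tendsto_integral_Ioi_atTop integrable_stdNormalPDF

lemma MeasureTheory.Integrable.mul_stdNormalSurv_comp {g c : ℝ → ℝ} (hg : Integrable g)
    (hc : Measurable c) :
    Integrable fun x => g x * stdNormalSurv (c x) := by
  refine (hg.bdd_mul (c := 1) (continuous_stdNormalSurv.measurable.comp hc).aestronglyMeasurable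
    (Eventually.of_forall fun x => ?_)).congr (Eventually.of_forall fun x => mul_comm _ _)
  rw [Function.comp_apply, Real.norm_eq_abs, abs_of_nonneg (stdNormalSurv_nonneg _)]
  exact stdNormalSurv_le_one _

section LocationScale

variable (m : ℝ) {s : ℝ}

lemma integrable_stdNormalPDF_affine (hs : s ≠ 0) :
    Integrable fun y => stdNormalPDF ((y - m) / s) :=
  (integrable_stdNormalPDF.comp_div hs).comp_sub_right m

lemma integrable_mul_stdNormalPDF_affine (hs : s ≠ 0) :
    Integrable fun y => y * stdNormalPDF ((y - m) / s) := by
  have h := (((integrable_pow_mul_stdNormalPDF 1).comp_div hs).comp_sub_right m).const_mul s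
  refine (h.add ((integrable_stdNormalPDF_affine m hs).const_mul m)).congr
    (Eventually.of_forall fun y => ?_)
  simp only [pow_one, Pi.add_apply]
  field_simp
  ring

lemma tendsto_sub_div_atTop (hs : 0 < s) : Tendsto (fun y => (y - m) / s) atTop atTop :=
  (tendsto_atTop_add_const_right _ (-m) tendsto_id).atTop_div_const hs

lemma hasDerivAt_sub_div (s y : ℝ) : HasDerivAt (fun y => (y - m) / s) s⁻¹ y :=
  (((hasDerivAt_id' y).sub_const m).div_const s).congr_deriv (one_div s)

lemma integral_Ioi_stdNormalPDF_affine (hs : 0 < s) (v : ℝ) :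
    ∫ y in Ioi v, s⁻¹ * stdNormalPDF ((y - m) / s) = stdNormalSurv ((v - m) / s) := by
  have hderiv (y : ℝ) : HasDerivAt (fun y => -stdNormalSurv ((y - m) / s))
      (s⁻¹ * stdNormalPDF ((y - m) / s)) y :=
    ((hasDerivAt_stdNormalSurv _).comp y (hasDerivAt_sub_div m s y)).neg.congr_deriv (by ring)
  rw [integral_Ioi_of_hasDerivAt_of_tendsto' (fun y _ => hderiv y)
    ((integrable_stdNormalPDF_affine m hs.ne').const_mul s⁻¹).integrableOn
    (by simpa using (tendsto_stdNormalSurv_atTop.comp (tendsto_sub_div_atTop m hs)).neg)]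
  ring

lemma integral_Ioi_mul_stdNormalPDF_affine (hs : 0 < s) (v : ℝ) :
    ∫ y in Ioi v, y * (s⁻¹ * stdNormalPDF ((y - m) / s))
      = m * stdNormalSurv ((v - m) / s) + s * stdNormalPDF ((v - m) / s) := by
  have hderiv (y : ℝ) : HasDerivAt
      (fun y => -(m * stdNormalSurv ((y - m) / s) + s * stdNormalPDF ((y - m) / s)))
      (y * (s⁻¹ * stdNormalPDF ((y - m) / s))) y := by
    have h := (((hasDerivAt_stdNormalSurv _).comp y (hasDerivAt_sub_div m s y)).const_mul m).add
      (((hasDerivAt_stdNormalPDF _).comp y (hasDerivAt_sub_div m s y)).const_mul s)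
    refine h.neg.congr_deriv ?_
    field_simp
    ring
  have hlim : Tendsto
      (fun y => -(m * stdNormalSurv ((y - m) / s) + s * stdNormalPDF ((y - m) / s)))
      atTop (𝓝 0) := by
    simpa using (((tendsto_stdNormalSurv_atTop.comp (tendsto_sub_div_atTop m hs)).const_mul m).add
      ((tendsto_stdNormalPDF_atTop.comp (tendsto_sub_div_atTop m hs)).const_mul s)).neg
  rw [integral_Ioi_of_hasDerivAt_of_tendsto' (fun y _ => hderiv y) ?_ hlim]
  · ring
  · simpa [mul_left_comm] using
      ((integrable_mul_stdNormalPDF_affine m hs.ne').const_mul s⁻¹).integrableOn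

end LocationScale

section Bivariate

variable {ρ s : ℝ}

lemma bvnPDF_comm (ρ x y : ℝ) : bvnPDF ρ x y = bvnPDF ρ y x := by
  unfold bvnPDF; ring_nf

lemma bvnPDF_eq_mul (hs : 0 < s) (hs2 : s ^ 2 = 1 - ρ ^ 2) (x y : ℝ) :
    bvnPDF ρ x y = stdNormalPDF x * (s⁻¹ * stdNormalPDF ((y - ρ * x) / s)) := by
  have hsqrt : Real.sqrt (1 - ρ ^ 2) = s := by rw [← hs2, Real.sqrt_sq hs.le]
  have hexp : -(x ^ 2 - 2 * ρ * x * y + y ^ 2) / (2 * (1 - ρ ^ 2))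
      = -x ^ 2 / 2 + -((y - ρ * x) / s) ^ 2 / 2 := by
    rw [← hs2]; field_simp; linear_combination x ^ 2 * hs2
  unfold bvnPDF stdNormalPDF
  rw [hsqrt, hexp, Real.exp_add]
  field_simp
  exact Real.sq_sqrt (by positivity)

lemma bvnPDF_eq_stdNormalPDF_sqrt (hs : 0 < s) (hs2 : s ^ 2 = 1 - ρ ^ 2) (x y : ℝ) :
    bvnPDF ρ x y = (s * Real.sqrt (2 * Real.pi))⁻¹ *
      stdNormalPDF (Real.sqrt (x ^ 2 - 2 * ρ * x * y + y ^ 2) / s) := by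
  have hq : 0 ≤ x ^ 2 - 2 * ρ * x * y + y ^ 2 := by
    nlinarith [sq_nonneg (x - ρ * y), sq_nonneg (s * y)]
  have hsqrt : Real.sqrt (1 - ρ ^ 2) = s := by rw [← hs2, Real.sqrt_sq hs.le]
  unfold bvnPDF stdNormalPDF
  rw [div_pow, Real.sq_sqrt hq, hsqrt, hs2]
  field_simp
  exact Real.sq_sqrt (by positivity)

lemma integrable_mul_bvnPDF (hs : 0 < s) (hs2 : s ^ 2 = 1 - ρ ^ 2) (y : ℝ) :
    Integrable fun x => x * bvnPDF ρ x y := by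
  simp_rw [bvnPDF_comm ρ _ y, bvnPDF_eq_mul hs hs2 y, mul_left_comm _ (stdNormalPDF y),
    ← mul_assoc _ s⁻¹, mul_comm _ s⁻¹, mul_assoc s⁻¹]
  exact ((integrable_mul_stdNormalPDF_affine (ρ * y) hs.ne').const_mul s⁻¹).const_mul _

lemma integral_Ioi_bvnPDF (hs : 0 < s) (hs2 : s ^ 2 = 1 - ρ ^ 2) (x v : ℝ) :
    ∫ y in Ioi v, bvnPDF ρ x y = stdNormalPDF x * stdNormalSurv ((v - ρ * x) / s) := by
  simp_rw [bvnPDF_eq_mul hs hs2 x]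
  rw [integral_const_mul, integral_Ioi_stdNormalPDF_affine (ρ * x) hs]

lemma integral_Ioi_mul_bvnPDF (hs : 0 < s) (hs2 : s ^ 2 = 1 - ρ ^ 2) (x v : ℝ) :
    ∫ y in Ioi v, y * bvnPDF ρ x y
      = ρ * x * stdNormalPDF x * stdNormalSurv ((v - ρ * x) / s) + s ^ 2 * bvnPDF ρ x v := by
  simp_rw [bvnPDF_eq_mul hs hs2 x, mul_left_comm _ (stdNormalPDF x)]
  rw [integral_const_mul, integral_Ioi_mul_stdNormalPDF_affine (ρ * x) hs]
  field_simp

lemma hasDerivAt_stdNormalPDF_mul_stdNormalSurv (hs : 0 < s) (hs2 : s ^ 2 = 1 - ρ ^ 2)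
    (v x : ℝ) :
    HasDerivAt (fun x => stdNormalPDF x * stdNormalSurv ((v - ρ * x) / s))
      (-x * (stdNormalPDF x * stdNormalSurv ((v - ρ * x) / s)) + ρ * bvnPDF ρ x v) x := by
  have ha : HasDerivAt (fun x => (v - ρ * x) / s) (-ρ / s) x := by
    simpa using (((hasDerivAt_id' x).const_mul ρ).const_sub v).div_const s
  refine ((hasDerivAt_stdNormalPDF x).mul ((hasDerivAt_stdNormalSurv _).comp x ha)).congr_deriv ?_
  rw [bvnPDF_eq_mul hs hs2, Function.comp_apply]
  field_simp

lemma integral_Ioi_sq_mul_stdNormalPDF_mul_stdNormalSurv (hs : 0 < s)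
    (hs2 : s ^ 2 = 1 - ρ ^ 2) (u v : ℝ) :
    ∫ x in Ioi u, x ^ 2 * stdNormalPDF x * stdNormalSurv ((v - ρ * x) / s)
      = (∫ x in Ioi u, stdNormalPDF x * stdNormalSurv ((v - ρ * x) / s))
        + u * stdNormalPDF u * stdNormalSurv ((v - ρ * u) / s)
        + ρ * ∫ x in Ioi u, x * bvnPDF ρ x v := by
  have hc : Measurable fun x : ℝ => (v - ρ * x) / s := by fun_prop
  have hL := integrable_stdNormalPDF.mul_stdNormalSurv_comp hc
  have hxL : Integrable fun x => x * (stdNormalPDF x * stdNormalSurv ((v - ρ * x) / s)) := by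
    simpa only [pow_one, mul_assoc] using
      (integrable_pow_mul_stdNormalPDF 1).mul_stdNormalSurv_comp hc
  have hx2L := (integrable_pow_mul_stdNormalPDF 2).mul_stdNormalSurv_comp hc
  have hxf := integrable_mul_bvnPDF hs hs2 v
  have hderiv (x : ℝ) :
      HasDerivAt (fun x => x * (stdNormalPDF x * stdNormalSurv ((v - ρ * x) / s)))
      (stdNormalPDF x * stdNormalSurv ((v - ρ * x) / s)
        - x ^ 2 * stdNormalPDF x * stdNormalSurv ((v - ρ * x) / s)
        + ρ * (x * bvnPDF ρ x v)) x :=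
    ((hasDerivAt_id' x).mul (hasDerivAt_stdNormalPDF_mul_stdNormalSurv hs hs2 v x)).congr_deriv
      (by ring)
  have hint := (hL.sub' hx2L).fun_add (hxf.const_mul ρ)
  -- The boundary term at `∞` vanishes because the antiderivative is itself integrable.
  have h := integral_Ioi_of_hasDerivAt_of_tendsto' (a := u) (fun x _ => hderiv x) hint.integrableOn
    (tendsto_zero_of_hasDerivAt_of_integrableOn_Ioi (a := u) (fun x _ => hderiv x)
      hint.integrableOn hxL.integrableOn)
  rw [integral_add (hL.sub' hx2L).integrableOn (hxf.const_mul ρ).integrableOn,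
    integral_sub hL.integrableOn hx2L.integrableOn, integral_const_mul] at h
  linarith

lemma integral_Ioi_integral_Ioi_mul_mul_bvnPDF (hs : 0 < s) (hs2 : s ^ 2 = 1 - ρ ^ 2)
    (u v : ℝ) :
    ∫ x in Ioi u, ∫ y in Ioi v, x * y * bvnPDF ρ x y
      = ρ * ell u v ρ + ρ * u * stdNormalPDF u * stdNormalSurv ((v - ρ * u) / s)
        + ρ * v * stdNormalPDF v * stdNormalSurv ((u - ρ * v) / s) + s ^ 2 * bvnPDF ρ u v := by
  have hinner (x : ℝ) : ∫ y in Ioi v, x * y * bvnPDF ρ x y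
      = ρ * (x ^ 2 * stdNormalPDF x * stdNormalSurv ((v - ρ * x) / s))
        + s ^ 2 * (x * bvnPDF ρ x v) := by
    simp_rw [mul_assoc x]
    rw [integral_const_mul, integral_Ioi_mul_bvnPDF hs hs2]
    ring
  have hswap : ∫ x in Ioi u, x * bvnPDF ρ x v
      = ρ * v * stdNormalPDF v * stdNormalSurv ((u - ρ * v) / s) + s ^ 2 * bvnPDF ρ u v := by
    simp_rw [bvnPDF_comm ρ _ v]
    exact integral_Ioi_mul_bvnPDF hs hs2 v u
  have hx2L := (integrable_pow_mul_stdNormalPDF 2).mul_stdNormalSurv_comp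
    (show Measurable fun x : ℝ => (v - ρ * x) / s by fun_prop)
  simp_rw [hinner]
  rw [integral_add (hx2L.const_mul ρ).integrableOn
      ((integrable_mul_bvnPDF hs hs2 v).const_mul _).integrableOn,
    integral_const_mul, integral_const_mul,
    integral_Ioi_sq_mul_stdNormalPDF_mul_stdNormalSurv hs hs2, hswap, ell]
  simp_rw [integral_Ioi_bvnPDF hs hs2]
  linear_combination (ρ * v * stdNormalPDF v * stdNormalSurv ((u - ρ * v) / s)
    + s ^ 2 * bvnPDF ρ u v) * hs2

end Bivariate

/-- The truncated moment `m₁₁` identity for the standard bivariate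
normal distribution with correlation `ρ ∈ (-1, 1)`. -/
theorem stmt_3 (ρ u v : ℝ) (hρ₁ : -1 < ρ) (hρ₂ : ρ < 1) :
    (∫ x in Set.Ioi u, ∫ y in Set.Ioi v, x * y * bvnPDF ρ x y)
      = ρ * ell u v ρ
        + ρ * u * stdNormalPDF u * stdNormalSurv ((v - ρ * u) / Real.sqrt (1 - ρ ^ 2))
        + ρ * v * stdNormalPDF v * stdNormalSurv ((u - ρ * v) / Real.sqrt (1 - ρ ^ 2))
        + (Real.sqrt (1 - ρ ^ 2) / Real.sqrt (2 * Real.pi)) *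
            stdNormalPDF (Real.sqrt (u ^ 2 - 2 * ρ * u * v + v ^ 2) / Real.sqrt (1 - ρ ^ 2)) := by
  have hρ : 0 < 1 - ρ ^ 2 := by nlinarith
  set s := Real.sqrt (1 - ρ ^ 2)
  have hs : 0 < s := Real.sqrt_pos.2 hρ
  have hs2 : s ^ 2 = 1 - ρ ^ 2 := Real.sq_sqrt hρ.le
  rw [integral_Ioi_integral_Ioi_mul_mul_bvnPDF hs hs2, bvnPDF_eq_stdNormalPDF_sqrt hs hs2]
  field_simp
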